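/- Let n, p, K ≥ 1, y ∈ ℝⁿ, λ > 0, T an n×p real matrix, and Z an n×K real matrix, and set Σ̃ = ZZᵀ. Then: (i) for every c ∈ ℝⁿ and d ∈ ℝᵖ, setting b = Zᵀc gives ‖y − Td − Σ̃c‖² + nλ cᵀΣ̃c = ‖y − Td − Zb‖² + nλ‖b‖²; and (ii) the infimum over (c, d) ∈ ℝⁿ × ℝᵖ of ‖y − Td − Σ̃c‖² + nλ cᵀΣ̃c equals the infimum over (b, d) ∈ ℝᴷ × ℝᵖ of ‖y − Td − Zb‖² + nλ‖b‖². -/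

import Mathlib

/-!
Part (i) is the identity `cᵀ Z Zᵀ c = ‖Zᵀ c‖²`. For part (ii), the substitution `b = Zᵀ c` maps
the first objective onto the second, and loses nothing at the infimum: every `b` splits as
`b = Zᵀ c + r` with `Z r = 0` (because `Z Zᵀ` and `Z` have the same range), and `r ⊥ Zᵀ c`,
so replacing `b` by `Zᵀ c` keeps `Z b` and does not increase `‖b‖²`.
-/

open Matrix BigOperators

/-- Squared Euclidean norm of a real vector. -/
noncomputable def vnormSq {m : ℕ} (v : Fin m → ℝ) : ℝ := ∑ i, (v i) ^ 2

theorem ciInf_comp_eq_of_forall_exists_le {α β γ : Type*} [ConditionallyCompleteLattice γ]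
    [Nonempty α] {g : β → γ} (hg : BddBelow (Set.range g)) (φ : α → β)
    (h : ∀ b, ∃ a, g (φ a) ≤ g b) : ⨅ a, g (φ a) = ⨅ b, g b := by
  have : Nonempty β := Nonempty.map φ ‹_›
  refine le_antisymm (le_ciInf fun b => ?_) (le_ciInf fun a => ciInf_le hg (φ a))
  obtain ⟨a, ha⟩ := h b
  exact (ciInf_le (hg.mono (Set.range_comp_subset_range φ g)) a).trans ha

namespace Matrix

variable {m n R : Type*} [Fintype m] [Fintype n]

theorem dotProduct_mul_transpose_mulVec [CommSemiring R] (Z : Matrix m n R) (c : m → R) :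
    c ⬝ᵥ ((Z * Zᵀ) *ᵥ c) = (Zᵀ *ᵥ c) ⬝ᵥ (Zᵀ *ᵥ c) := by
  rw [← mulVec_mulVec, dotProduct_mulVec, mulVec_transpose]

theorem range_mulVecLin_mul_transpose [Field R] [LinearOrder R] [IsStrictOrderedRing R]
    (Z : Matrix m n R) :
    LinearMap.range (Z * Zᵀ).mulVecLin = LinearMap.range Z.mulVecLin := by
  refine Submodule.eq_of_le_of_finrank_eq ?_ (rank_self_mul_transpose Z)
  rw [mulVecLin_mul]
  exact LinearMap.range_comp_le_range _ _

theorem exists_mulVec_transpose_mulVec_eq [Field R] [LinearOrder R] [IsStrictOrderedRing R]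
    (Z : Matrix m n R) (b : n → R) : ∃ c, Z *ᵥ (Zᵀ *ᵥ c) = Z *ᵥ b := by
  obtain ⟨c, hc⟩ : Z *ᵥ b ∈ LinearMap.range (Z * Zᵀ).mulVecLin := by
    rw [range_mulVecLin_mul_transpose]
    exact LinearMap.mem_range_self _ b
  exact ⟨c, by rw [mulVec_mulVec]; exact hc⟩

theorem dotProduct_self_transpose_mulVec_le [CommRing R] [LinearOrder R] [IsStrictOrderedRing R]
    (Z : Matrix m n R) {b : n → R} {c : m → R} (h : Z *ᵥ (Zᵀ *ᵥ c) = Z *ᵥ b) :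
    (Zᵀ *ᵥ c) ⬝ᵥ (Zᵀ *ᵥ c) ≤ b ⬝ᵥ b := by
  set r := b - Zᵀ *ᵥ c
  have hr : Z *ᵥ r = 0 := by rw [mulVec_sub, h, sub_self]
  have horth : (Zᵀ *ᵥ c) ⬝ᵥ r = 0 := by
    rw [mulVec_transpose, ← dotProduct_mulVec, hr, dotProduct_zero]
  have hb : b = Zᵀ *ᵥ c + r := by simp [r]
  have hrr : 0 ≤ r ⬝ᵥ r := Finset.sum_nonneg fun i _ => mul_self_nonneg (r i)
  rw [hb, add_dotProduct, dotProduct_add, dotProduct_add, horth, dotProduct_comm r, horth]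
  linarith

end Matrix

theorem vnormSq_eq_dotProduct {m : ℕ} (v : Fin m → ℝ) : vnormSq v = v ⬝ᵥ v := by
  simp only [vnormSq, dotProduct, sq]

theorem vnormSq_nonneg {m : ℕ} (v : Fin m → ℝ) : 0 ≤ vnormSq v :=
  Finset.sum_nonneg fun _ _ => sq_nonneg _

theorem stmt13_general (n p K : ℕ)
    (y : Fin n → ℝ) (lam : ℝ) (hlam : 0 < lam)
    (T : Matrix (Fin n) (Fin p) ℝ) (Z : Matrix (Fin n) (Fin K) ℝ) :
    (∀ (c : Fin n → ℝ) (d : Fin p → ℝ),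
      vnormSq (y - T *ᵥ d - (Z * Zᵀ) *ᵥ c) + (n : ℝ) * lam * (c ⬝ᵥ ((Z * Zᵀ) *ᵥ c)) =
      vnormSq (y - T *ᵥ d - Z *ᵥ (Zᵀ *ᵥ c)) + (n : ℝ) * lam * vnormSq (Zᵀ *ᵥ c)) ∧
    (⨅ cd : (Fin n → ℝ) × (Fin p → ℝ),
        vnormSq (y - T *ᵥ cd.2 - (Z * Zᵀ) *ᵥ cd.1) +
          (n : ℝ) * lam * (cd.1 ⬝ᵥ ((Z * Zᵀ) *ᵥ cd.1))) =
    (⨅ bd : (Fin K → ℝ) × (Fin p → ℝ),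
        vnormSq (y - T *ᵥ bd.2 - Z *ᵥ bd.1) + (n : ℝ) * lam * vnormSq bd.1) := by
  have substitution : ∀ (c : Fin n → ℝ) (d : Fin p → ℝ),
      vnormSq (y - T *ᵥ d - (Z * Zᵀ) *ᵥ c) + (n : ℝ) * lam * (c ⬝ᵥ ((Z * Zᵀ) *ᵥ c)) =
      vnormSq (y - T *ᵥ d - Z *ᵥ (Zᵀ *ᵥ c)) + (n : ℝ) * lam * vnormSq (Zᵀ *ᵥ c) := by
    intro c d
    rw [dotProduct_mul_transpose_mulVec, ← vnormSq_eq_dotProduct, mulVec_mulVec]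
  refine ⟨substitution, ?_⟩
  simp only [substitution]
  have hnlam : 0 ≤ (n : ℝ) * lam := by positivity
  refine ciInf_comp_eq_of_forall_exists_le
    (g := fun bd : (Fin K → ℝ) × (Fin p → ℝ) =>
      vnormSq (y - T *ᵥ bd.2 - Z *ᵥ bd.1) + (n : ℝ) * lam * vnormSq bd.1)
    ⟨0, ?_⟩ (fun cd : (Fin n → ℝ) × (Fin p → ℝ) => (Zᵀ *ᵥ cd.1, cd.2)) ?_
  · rintro _ ⟨bd, rfl⟩
    exact add_nonneg (vnormSq_nonneg _) (mul_nonneg hnlam (vnormSq_nonneg _))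
  · rintro ⟨b, d⟩
    obtain ⟨c, hc⟩ := exists_mulVec_transpose_mulVec_eq Z b
    refine ⟨(c, d), ?_⟩
    have hle := dotProduct_self_transpose_mulVec_le Z hc
    simp only [hc, ← vnormSq_eq_dotProduct] at hle ⊢
    gcongr

/-- with `Σ̃ = ZZᵀ`, (i) for every `c, d`, setting `b = Zᵀc` gives
`‖y − Td − Σ̃c‖² + nλ cᵀΣ̃c = ‖y − Td − Zb‖² + nλ‖b‖²`; and (ii) the infimum over `(c, d)` of
`‖y − Td − Σ̃c‖² + nλ cᵀΣ̃c` equals the infimum over `(b, d)` of `‖y − Td − Zb‖² + nλ‖b‖²`. -/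
theorem stmt13 (n p K : ℕ) (hn : 1 ≤ n) (hp : 1 ≤ p) (hK : 1 ≤ K)
    (y : Fin n → ℝ) (lam : ℝ) (hlam : 0 < lam)
    (T : Matrix (Fin n) (Fin p) ℝ) (Z : Matrix (Fin n) (Fin K) ℝ) :
    (∀ (c : Fin n → ℝ) (d : Fin p → ℝ),
      vnormSq (y - T *ᵥ d - (Z * Zᵀ) *ᵥ c) + (n : ℝ) * lam * (c ⬝ᵥ ((Z * Zᵀ) *ᵥ c)) =
      vnormSq (y - T *ᵥ d - Z *ᵥ (Zᵀ *ᵥ c)) + (n : ℝ) * lam * vnormSq (Zᵀ *ᵥ c)) ∧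
    (⨅ cd : (Fin n → ℝ) × (Fin p → ℝ),
        vnormSq (y - T *ᵥ cd.2 - (Z * Zᵀ) *ᵥ cd.1) +
          (n : ℝ) * lam * (cd.1 ⬝ᵥ ((Z * Zᵀ) *ᵥ cd.1))) =
    (⨅ bd : (Fin K → ℝ) × (Fin p → ℝ),
        vnormSq (y - T *ᵥ bd.2 - Z *ᵥ bd.1) + (n : ℝ) * lam * vnormSq bd.1) :=
  stmt13_general n p K y lam hlam T Z
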